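/- arXiv:2208.00552 — 2 statements merged into one kernel-verified Lean document; each statement's English description precedes it below -/
import Mathlib

section
/- Let (Y, X, W₁, W₂) satisfy: Var(Y, X, W₁, W₂) finite, Var(X, W₁, W₂) and Var(Y, X, W₁) positive definite, Cov(W₁, W₂) = 0, Var(W₂) = 1, γ₁ ≠ 0 and γ₂ ≠ 0 (coefficients on W₁ and W₂ in the long projection of Y on (X, W₁, W₂)), and suppose δ ∈ ℝ satisfies δ·Cov(X, γ₁'W₁)/Var(γ₁'W₁) = Cov(X, γ₂W₂)/Var(γ₂W₂). Let B = β_med − β_long, R²_long = Var(fitted long)/Var(Y), R²_med = Var(fitted medium)/Var(Y). Then (R²_long − R²_med)·Var(Y)·δ·Cov(X, γ₁'W₁) = B·Var(X^{⊥W₁})·( Var(γ₁'W₁) − B·δ·Cov(X, γ₁'W₁) ). -/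
/-!
Subtracting the two projections, the medium residual minus the long residual is
`γ₂W₂ − B·X^{⊥W₁}` up to a combination of `W₁` that is orthogonal to `W₁`, hence zero. Since the
long residual is orthogonal to this difference, `R²_long − R²_med` is `‖γ₂W₂ − B·X^{⊥W₁}‖²/Var(Y)`.
Orthogonality of the medium residual to `X` gives `γ₂·Cov(X, W₂) = B·Var(X^{⊥W₁})`, and the
definition of `δ` gives `γ₂·δ·Cov(X, γ₁'W₁) = Var(γ₁'W₁)·Cov(X, W₂)`; the identity is then algebra.
-/

open scoped RealInnerProductSpace Matrix

/-- Gram (covariance) matrix of a finite family of demeaned square-integrable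
random variables, modeled as vectors in a real inner product space where
`⟪A, B⟫` is `Cov(A, B)`. -/
noncomputable def gram {V : Type*} [NormedAddCommGroup V] [InnerProductSpace ℝ V]
    {ι : Type*} [Fintype ι] (f : ι → V) : Matrix ι ι ℝ :=
  Matrix.of fun i j => ⟪f i, f j⟫

/-- `π₁ = Var(W₁)⁻¹ Cov(W₁, X)`: coefficient vector of the linear projection of
`X` on `W₁`. -/
noncomputable def pi1 {V : Type*} [NormedAddCommGroup V] [InnerProductSpace ℝ V]
    {d : ℕ} (W₁ : Fin d → V) (X : V) : Fin d → ℝ :=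
  (gram W₁)⁻¹.mulVec fun i => ⟪W₁ i, X⟫

/-- `X^{⊥W₁} = X − π₁'W₁`. -/
noncomputable def perpW1 {V : Type*} [NormedAddCommGroup V] [InnerProductSpace ℝ V]
    {d : ℕ} (W₁ : Fin d → V) (X : V) : V :=
  X - ∑ i, pi1 W₁ X i • W₁ i

section

variable {V : Type*} [NormedAddCommGroup V] [InnerProductSpace ℝ V]

lemma gram_mulVec_apply {ι : Type*} [Fintype ι] (v : ι → V) (c : ι → ℝ) (i : ι) :
    (gram v *ᵥ c) i = ⟪v i, ∑ j, c j • v j⟫ := by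
  simp only [Matrix.mulVec, dotProduct, gram, Matrix.of_apply, inner_sum, real_inner_smul_right,
    mul_comm]

lemma sum_smul_eq_zero_of_forall_inner_eq_zero {ι : Type*} [Fintype ι] {v : ι → V} {c : ι → ℝ}
    (h : ∀ i, ⟪∑ j, c j • v j, v i⟫ = 0) : ∑ j, c j • v j = 0 := by
  rw [← inner_self_eq_zero (𝕜 := ℝ)]
  simp only [inner_sum, real_inner_smul_right, h, mul_zero, Finset.sum_const_zero]

lemma inner_smul_add_sum_smul_eq_zero {ι : Type*} [Fintype ι] {U X : V} {v : ι → V}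
    (hX : ⟪U, X⟫ = 0) (hv : ∀ i, ⟪U, v i⟫ = 0) (a : ℝ) (c : ι → ℝ) :
    ⟪U, a • X + ∑ i, c i • v i⟫ = 0 := by
  simp only [inner_add_right, real_inner_smul_right, inner_sum, hX, hv, mul_zero,
    Finset.sum_const_zero, add_zero]

lemma inner_self_eq_sub_of_eq_add {Y F U : V} (h : Y = F + U) (hUF : ⟪U, F⟫ = 0) :
    ⟪F, F⟫ = ⟪Y, Y⟫ - ⟪U, U⟫ := by
  rw [h, real_inner_add_add_self, real_inner_comm U F, hUF]
  ring

lemma inner_self_pos_of_eq_add {Y F U : V} (h : Y = F + U) (hUF : ⟪U, F⟫ = 0) (hF : F ≠ 0) :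
    0 < ⟪Y, Y⟫ := by
  have := inner_self_eq_sub_of_eq_add h hUF
  linarith [real_inner_self_pos.2 hF, real_inner_self_nonneg (x := U)]

lemma mul_mul_inner_eq_of_selection_ratio {X G W : V} {γ δ : ℝ} (hW : ⟪W, W⟫ = 1) (hγ : γ ≠ 0)
    (hG : G ≠ 0) (hδ : δ * (⟪X, G⟫ / ⟪G, G⟫) = ⟪X, γ • W⟫ / ⟪γ • W, γ • W⟫) :
    γ * (δ * ⟪X, G⟫) = ⟪G, G⟫ * ⟪X, W⟫ := by
  have : ⟪G, G⟫ ≠ 0 := inner_self_ne_zero.2 hG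
  rw [real_inner_smul_right, real_inner_smul_left, real_inner_smul_right, hW] at hδ
  field_simp at hδ
  linear_combination hδ

variable {d : ℕ} {W₁ : Fin d → V}

lemma inner_perpW1_eq_zero (hW₁ : LinearIndependent ℝ W₁) (X : V) (i : Fin d) :
    ⟪W₁ i, perpW1 W₁ X⟫ = 0 := by
  have hdet : IsUnit (gram W₁).det :=
    isUnit_iff_ne_zero.2 (Matrix.det_gram_ne_zero_iff_linearIndependent.2 hW₁)
  have hnormal : gram W₁ *ᵥ pi1 W₁ X = fun i => ⟪W₁ i, X⟫ := by
    rw [pi1, Matrix.mulVec_mulVec, Matrix.mul_nonsing_inv _ hdet, Matrix.one_mulVec]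
  rw [perpW1, inner_sub_right, ← gram_mulVec_apply, hnormal, sub_self]

lemma inner_perpW1_of_forall_inner_eq_zero {z : V} (hz : ∀ i, ⟪z, W₁ i⟫ = 0) (X : V) :
    ⟪z, perpW1 W₁ X⟫ = ⟪z, X⟫ := by
  simp only [perpW1, inner_sub_right, inner_sum, real_inner_smul_right, hz, mul_zero,
    Finset.sum_const_zero, sub_zero]

lemma inner_perpW1_self (hW₁ : LinearIndependent ℝ W₁) (X : V) :
    ⟪perpW1 W₁ X, perpW1 W₁ X⟫ = ⟪perpW1 W₁ X, X⟫ :=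
  inner_perpW1_of_forall_inner_eq_zero
    (fun i => by rw [real_inner_comm, inner_perpW1_eq_zero hW₁]) X

lemma smul_add_sum_smul_add_smul_ne_zero {X W₂ : V}
    (hXW : LinearIndependent ℝ (Sum.elim (fun _ : Unit => X) (Sum.elim W₁ fun _ : Unit => W₂)))
    (a : ℝ) (c : Fin d → ℝ) {b : ℝ} (hb : b ≠ 0) :
    a • X + (∑ i, c i • W₁ i) + b • W₂ ≠ 0 := fun h =>
  hb <| Fintype.linearIndependent_iff.1 hXW (Sum.elim (fun _ => a) (Sum.elim c fun _ => b))
    (by simpa [Fintype.sum_sum_type, add_assoc] using h) (Sum.inr (Sum.inr ()))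

variable {X W₂ U Vres : V} {γ₂ B : ℝ}

lemma residual_sub_residual_eq (hW₁ : LinearIndependent ℝ W₁) {Y : V} {βlong βmed : ℝ}
    {γ₁ γmed : Fin d → ℝ} (hexog : ∀ i, ⟪W₁ i, W₂⟫ = 0)
    (hlong : Y = βlong • X + (∑ i, γ₁ i • W₁ i) + γ₂ • W₂ + U) (hUW1 : ∀ i, ⟪U, W₁ i⟫ = 0)
    (hmed : Y = βmed • X + (∑ i, γmed i • W₁ i) + Vres) (hVW1 : ∀ i, ⟪Vres, W₁ i⟫ = 0) :
    Vres - U = γ₂ • W₂ - (βmed - βlong) • perpW1 W₁ X := by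
  set B := βmed - βlong
  have hspan : Vres - U - (γ₂ • W₂ - B • perpW1 W₁ X)
      = ∑ i, (γ₁ i - γmed i - B * pi1 W₁ X i) • W₁ i := by
    have hfits : Vres - U = βlong • X + (∑ i, γ₁ i • W₁ i) + γ₂ • W₂
        - (βmed • X + ∑ i, γmed i • W₁ i) := by
      rw [sub_eq_iff_eq_add, ← add_sub_right_comm, ← hlong, hmed]
      abel
    simp only [hfits, perpW1, sub_smul, Finset.sum_sub_distrib, mul_smul, ← Finset.smul_sum, B]
    module
  rw [← sub_eq_zero, hspan]
  refine sum_smul_eq_zero_of_forall_inner_eq_zero fun i => ?_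
  rw [← hspan, inner_sub_left, inner_sub_left, inner_sub_left, real_inner_smul_left,
    real_inner_smul_left, hVW1, hUW1, real_inner_comm, hexog, real_inner_comm,
    inner_perpW1_eq_zero hW₁]
  ring

lemma mul_inner_eq_mul_inner_perpW1_self (hW₁ : LinearIndependent ℝ W₁)
    (hres : Vres - U = γ₂ • W₂ - B • perpW1 W₁ X) (hVX : ⟪Vres, X⟫ = 0) (hUX : ⟪U, X⟫ = 0) :
    γ₂ * ⟪X, W₂⟫ = B * ⟪perpW1 W₁ X, perpW1 W₁ X⟫ := by
  have h : ⟪Vres - U, X⟫ = 0 := by rw [inner_sub_left, hVX, hUX, sub_zero]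
  rw [hres, inner_sub_left, real_inner_smul_left, real_inner_smul_left,
    ← inner_perpW1_self hW₁, real_inner_comm] at h
  linear_combination h

lemma inner_self_sub_inner_self_eq (hres : Vres - U = γ₂ • W₂ - B • perpW1 W₁ X)
    (hexog : ∀ i, ⟪W₁ i, W₂⟫ = 0) (hnorm : ⟪W₂, W₂⟫ = 1) (hUX : ⟪U, X⟫ = 0)
    (hUW1 : ∀ i, ⟪U, W₁ i⟫ = 0) (hUW2 : ⟪U, W₂⟫ = 0) :
    ⟪Vres, Vres⟫ - ⟪U, U⟫
      = γ₂ ^ 2 - 2 * γ₂ * B * ⟪X, W₂⟫ + B ^ 2 * ⟪perpW1 W₁ X, perpW1 W₁ X⟫ := by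
  have hUres : ⟪U, Vres - U⟫ = 0 := by
    rw [hres, inner_sub_right, real_inner_smul_right, real_inner_smul_right, hUW2,
      inner_perpW1_of_forall_inner_eq_zero hUW1, hUX]
    ring
  have hW₂ : ⟪W₂, perpW1 W₁ X⟫ = ⟪X, W₂⟫ := by
    rw [inner_perpW1_of_forall_inner_eq_zero (fun i => by rw [real_inner_comm, hexog]),
      real_inner_comm]
  rw [← inner_self_eq_sub_of_eq_add (sub_add_cancel Vres U).symm hUres, hres,
    real_inner_sub_sub_self, real_inner_smul_left, real_inner_smul_right,
    real_inner_smul_left, real_inner_smul_right, real_inner_smul_left, real_inner_smul_right,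
    hnorm, hW₂]
  ring

end

theorem oster_third_equation_general
    {V : Type*} [NormedAddCommGroup V] [InnerProductSpace ℝ V] {d : ℕ}
    (Y X W₂ : V) (W₁ : Fin d → V)
    (hpdXW : (gram (Sum.elim (fun _ : Unit => X) (Sum.elim W₁ fun _ : Unit => W₂))).PosDef)
    (hexog : ∀ i, ⟪W₁ i, W₂⟫ = 0)
    (hnorm : ⟪W₂, W₂⟫ = 1)
    (βlong βmed γ₂ δ : ℝ) (γ₁ γmed : Fin d → ℝ) (U Vres : V)
    (hγ₁ : γ₁ ≠ 0) (hγ₂ : γ₂ ≠ 0)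
    (hlong : Y = βlong • X + (∑ i, γ₁ i • W₁ i) + γ₂ • W₂ + U)
    (hUX : ⟪U, X⟫ = 0) (hUW1 : ∀ i, ⟪U, W₁ i⟫ = 0) (hUW2 : ⟪U, W₂⟫ = 0)
    (hmed : Y = βmed • X + (∑ i, γmed i • W₁ i) + Vres)
    (hVX : ⟪Vres, X⟫ = 0) (hVW1 : ∀ i, ⟪Vres, W₁ i⟫ = 0)
    (hδ : δ * (⟪X, ∑ i, γ₁ i • W₁ i⟫ / ⟪∑ i, γ₁ i • W₁ i, ∑ i, γ₁ i • W₁ i⟫)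
        = ⟪X, γ₂ • W₂⟫ / ⟪γ₂ • W₂, γ₂ • W₂⟫) :
    (⟪βlong • X + (∑ i, γ₁ i • W₁ i) + γ₂ • W₂,
        βlong • X + (∑ i, γ₁ i • W₁ i) + γ₂ • W₂⟫ / ⟪Y, Y⟫
      - ⟪βmed • X + ∑ i, γmed i • W₁ i, βmed • X + ∑ i, γmed i • W₁ i⟫ / ⟪Y, Y⟫)
        * ⟪Y, Y⟫ * δ * ⟪X, ∑ i, γ₁ i • W₁ i⟫
      = (βmed - βlong) * ⟪perpW1 W₁ X, perpW1 W₁ X⟫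
          * (⟪∑ i, γ₁ i • W₁ i, ∑ i, γ₁ i • W₁ i⟫
            - (βmed - βlong) * δ * ⟪X, ∑ i, γ₁ i • W₁ i⟫) := by
  have hXW := Matrix.linearIndependent_of_posDef_gram (𝕜 := ℝ) hpdXW
  have hW₁ : LinearIndependent ℝ W₁ := hXW.comp _ (Sum.inr_injective.comp Sum.inl_injective)
  set G := ∑ i, γ₁ i • W₁ i
  have hres := residual_sub_residual_eq hW₁ hexog hlong hUW1 hmed hVW1
  have hUfit : ⟪U, βlong • X + G + γ₂ • W₂⟫ = 0 := by
    rw [inner_add_right, inner_smul_add_sum_smul_eq_zero hUX hUW1, real_inner_smul_right, hUW2,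
      mul_zero, add_zero]
  have hVfit := inner_smul_add_sum_smul_eq_zero hVX hVW1 βmed γmed
  have hY := inner_self_pos_of_eq_add hlong hUfit
    (smul_add_sum_smul_add_smul_ne_zero hXW βlong γ₁ hγ₂)
  have hG : G ≠ 0 := fun h => hγ₁ (funext (Fintype.linearIndependent_iff.1 hW₁ γ₁ h))
  have hselect := mul_mul_inner_eq_of_selection_ratio hnorm hγ₂ hG hδ
  have hcov := mul_inner_eq_mul_inner_perpW1_self hW₁ hres hVX hUX
  have hdiff := inner_self_sub_inner_self_eq hres hexog hnorm hUX hUW1 hUW2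
  rw [div_sub_div_same, div_mul_cancel₀ _ hY.ne', inner_self_eq_sub_of_eq_add hlong hUfit,
    inner_self_eq_sub_of_eq_add hmed hVfit]
  linear_combination δ * ⟪X, G⟫ * hdiff + γ₂ * hselect
    + (⟪G, G⟫ - 2 * (βmed - βlong) * δ * ⟪X, G⟫) * hcov

/-- Oster's third equation:
`(R²_long − R²_med)·Var(Y)·δ·Cov(X, γ₁'W₁)
   = B·Var(X^{⊥W₁})·(Var(γ₁'W₁) − B·δ·Cov(X, γ₁'W₁))`
with `B = β_med − β_long`, under exogenous controls, normalization
`Var(W₂) = 1`, nonzero long coefficients, and the proportional-selection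
definition of `δ`. -/
theorem oster_third_equation
    {V : Type*} [NormedAddCommGroup V] [InnerProductSpace ℝ V] {d : ℕ}
    (Y X W₂ : V) (W₁ : Fin d → V)
    (hpdXW : (gram (Sum.elim (fun _ : Unit => X) (Sum.elim W₁ fun _ : Unit => W₂))).PosDef)
    (hpdYX : (gram (Sum.elim (fun _ : Unit => Y) (Sum.elim (fun _ : Unit => X) W₁))).PosDef)
    (hexog : ∀ i, ⟪W₁ i, W₂⟫ = 0)
    (hnorm : ⟪W₂, W₂⟫ = 1)
    (βlong βmed γ₂ δ : ℝ) (γ₁ γmed : Fin d → ℝ) (U Vres : V)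
    (hγ₁ : γ₁ ≠ 0) (hγ₂ : γ₂ ≠ 0)
    (hlong : Y = βlong • X + (∑ i, γ₁ i • W₁ i) + γ₂ • W₂ + U)
    (hUX : ⟪U, X⟫ = 0) (hUW1 : ∀ i, ⟪U, W₁ i⟫ = 0) (hUW2 : ⟪U, W₂⟫ = 0)
    (hmed : Y = βmed • X + (∑ i, γmed i • W₁ i) + Vres)
    (hVX : ⟪Vres, X⟫ = 0) (hVW1 : ∀ i, ⟪Vres, W₁ i⟫ = 0)
    (hδ : δ * (⟪X, ∑ i, γ₁ i • W₁ i⟫ / ⟪∑ i, γ₁ i • W₁ i, ∑ i, γ₁ i • W₁ i⟫)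
        = ⟪X, γ₂ • W₂⟫ / ⟪γ₂ • W₂, γ₂ • W₂⟫) :
    (⟪βlong • X + (∑ i, γ₁ i • W₁ i) + γ₂ • W₂,
        βlong • X + (∑ i, γ₁ i • W₁ i) + γ₂ • W₂⟫ / ⟪Y, Y⟫
      - ⟪βmed • X + ∑ i, γmed i • W₁ i, βmed • X + ∑ i, γmed i • W₁ i⟫ / ⟪Y, Y⟫)
        * ⟪Y, Y⟫ * δ * ⟪X, ∑ i, γ₁ i • W₁ i⟫
      = (βmed - βlong) * ⟪perpW1 W₁ X, perpW1 W₁ X⟫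
          * (⟪∑ i, γ₁ i • W₁ i, ∑ i, γ₁ i • W₁ i⟫
            - (βmed - βlong) * δ * ⟪X, ∑ i, γ₁ i • W₁ i⟫) :=
  oster_third_equation_general Y X W₂ W₁ hpdXW hexog hnorm βlong βmed γ₂ δ γ₁ γmed U Vres hγ₁ hγ₂
    hlong hUX hUW1 hUW2 hmed hVX hVW1 hδ
end

section
/- Let f₀ and f₁ be as above, with Var(X^{⊥W₁}) > 0 and Var(Y) > 0, R²_long ∈ (R²_med, 1], and suppose β_short ≠ β_med (equivalently Cov(X, γ_med'W₁) ≠ 0). If B ∈ ℝ satisfies f₀(B) + δ·f₁(B, R²_long) = 0 for some δ ∈ ℝ, and if f₁(B, R²_long) = 0 would force f₀(B) = 0, then in fact f₁(B, R²_long) ≠ 0 unless B = β_med − b with b in the degenerate set {b : γ_med + (β_med − b)π₁ = 0}. Consequently, for any B = β_med − β_hypo with γ_med + B·π₁ ≠ 0, the value δ = −f₀(B)/f₁(B, R²_long) is the unique δ consistent with the bias being B. -/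
open scoped RealInnerProductSpace

/-- `f₀(B)` as in Oster's cubic. -/
noncomputable def f0 (vXp vGam cXg vPi B : ℝ) : ℝ :=
  -B * vXp * (vGam + 2 * B * cXg + B ^ 2 * vPi)

/-- `f₁(B, R²_long)` as in Oster's cubic. -/
noncomputable def f1 (R2l R2m vY cXg vPi vXp B : ℝ) : ℝ :=
  (R2l - R2m) * vY * cXg + B * (R2l - R2m) * vY * vPi
    + B ^ 2 * vXp * cXg + B ^ 3 * vXp * vPi

/-! Since `f₀(B) = -B·Var(X^⊥)·Var((γ_med + Bπ₁)'W₁)` and the variance factor is positive off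
the degenerate set, `f₀(B) = 0` forces `B = 0`; but `f₁(0, R²) = (R² − R²_med)·Var(Y)·Cov(X, γ_med'W₁)`,
and the covariance is nonzero because it is exactly the omitted-variable bias `β_short − β_med`
(up to the factor `Var(X)`). Hence `f₁(B, R²)` cannot vanish and the linear equation in `δ` has a
unique solution. -/

open scoped Matrix

section Cubic

variable {R2l R2m vY cXg vPi vXp vGam B : ℝ}

lemma eq_zero_of_f0_eq_zero (hvXp : vXp ≠ 0) (hq : vGam + 2 * B * cXg + B ^ 2 * vPi ≠ 0)
    (h : f0 vXp vGam cXg vPi B = 0) : B = 0 := by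
  simpa [f0, hvXp, hq] using h

lemma f1_zero : f1 R2l R2m vY cXg vPi vXp 0 = (R2l - R2m) * vY * cXg := by
  simp [f1]

lemma f1_ne_zero_and_eq_neg_f0_div_f1 {δ : ℝ} (hvXp : vXp ≠ 0)
    (hq : vGam + 2 * B * cXg + B ^ 2 * vPi ≠ 0) (h0 : (R2l - R2m) * vY * cXg ≠ 0)
    (h : f0 vXp vGam cXg vPi B + δ * f1 R2l R2m vY cXg vPi vXp B = 0) :
    f1 R2l R2m vY cXg vPi vXp B ≠ 0 ∧
      δ = -f0 vXp vGam cXg vPi B / f1 R2l R2m vY cXg vPi vXp B := by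
  have hf1 : f1 R2l R2m vY cXg vPi vXp B ≠ 0 := by
    intro hf1
    rw [hf1, mul_zero, add_zero] at h
    rw [eq_zero_of_f0_eq_zero hvXp hq h, f1_zero] at hf1
    exact h0 hf1
  refine ⟨hf1, ?_⟩
  rw [eq_div_iff hf1]
  linarith

end Cubic

section Projection

variable {V : Type*} [NormedAddCommGroup V] [InnerProductSpace ℝ V] {d : ℕ} {W : Fin d → V}

lemma gram_mulVec_pi1 (hW : IsUnit (gram W).det) (X : V) :
    gram W *ᵥ pi1 W X = fun i => ⟪W i, X⟫ := by
  rw [pi1, Matrix.mulVec_mulVec, Matrix.mul_nonsing_inv _ hW, Matrix.one_mulVec]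

lemma inner_sum_pi1_smul (hW : IsUnit (gram W).det) (X : V) (i : Fin d) :
    ⟪W i, ∑ j, pi1 W X j • W j⟫ = ⟪W i, X⟫ := by
  rw [← congrFun (gram_mulVec_pi1 hW X) i]
  simp only [inner_sum, real_inner_smul_right, Matrix.mulVec, dotProduct, gram, Matrix.of_apply,
    mul_comm]

lemma inner_perpW1_sum_smul (hW : IsUnit (gram W).det) (X : V) (c : Fin d → ℝ) :
    ⟪perpW1 W X, ∑ i, c i • W i⟫ = 0 := by
  rw [inner_sum]
  refine Finset.sum_eq_zero fun i _ => ?_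
  rw [real_inner_smul_right, perpW1, inner_sub_left, real_inner_comm (W i) X,
    real_inner_comm (W i), inner_sum_pi1_smul hW, sub_self, mul_zero]

lemma inner_sum_pi1_smul_sum_smul (hW : IsUnit (gram W).det) (X : V) (c : Fin d → ℝ) :
    ⟪∑ i, pi1 W X i • W i, ∑ i, c i • W i⟫ = ⟪X, ∑ i, c i • W i⟫ := by
  have h := inner_perpW1_sum_smul hW X c
  rw [perpW1, inner_sub_left, sub_eq_zero] at h
  exact h.symm

lemma sum_smul_ne_zero {ι : Type*} [Fintype ι] {W : ι → V} (hW : (gram W).PosDef) {c : ι → ℝ}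
    (hc : c ≠ 0) : ∑ i, c i • W i ≠ 0 := by
  have hli : LinearIndependent ℝ W := Matrix.linearIndependent_of_posDef_gram hW
  exact fun h => hc (funext (Fintype.linearIndependent_iff.mp hli c h))

/-- `Var(γ'W₁) + 2B·Cov(X, γ'W₁) + B²·Var(π₁'W₁) = Var((γ + Bπ₁)'W₁)`. -/
lemma f0_factor_pos (hW : (gram W).PosDef) (X : V) {γ : Fin d → ℝ} {B : ℝ}
    (h : γ + B • pi1 W X ≠ 0) :
    0 < ⟪∑ i, γ i • W i, ∑ i, γ i • W i⟫ + 2 * B * ⟪X, ∑ i, γ i • W i⟫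
      + B ^ 2 * ⟪∑ i, pi1 W X i • W i, ∑ i, pi1 W X i • W i⟫ := by
  have hdet : IsUnit (gram W).det := isUnit_iff_ne_zero.mpr hW.det_pos.ne'
  set G := ∑ i, γ i • W i
  set P := ∑ i, pi1 W X i • W i
  have hsum : G + B • P = ∑ i, (γ + B • pi1 W X) i • W i := by
    simp only [G, P, Finset.smul_sum, ← Finset.sum_add_distrib, Pi.add_apply, Pi.smul_apply,
      add_smul, smul_smul, smul_eq_mul]
  have hexpand : ⟪G + B • P, G + B • P⟫
      = ⟪G, G⟫ + 2 * B * ⟪X, G⟫ + B ^ 2 * ⟪P, P⟫ := by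
    rw [real_inner_add_add_self, real_inner_smul_right, real_inner_smul_left,
      real_inner_smul_right, real_inner_comm P G, inner_sum_pi1_smul_sum_smul hdet X γ]
    ring
  rw [← hexpand, real_inner_self_pos, hsum]
  exact sum_smul_ne_zero hW h

/-- Omitted-variable bias formula. -/
lemma inner_div_inner_self_eq_add {Y X G R : V} {β : ℝ} (hY : Y = β • X + G + R)
    (hR : ⟪R, X⟫ = 0) (hX : ⟪X, X⟫ ≠ 0) : ⟪Y, X⟫ / ⟪X, X⟫ = β + ⟪X, G⟫ / ⟪X, X⟫ := by
  rw [hY, inner_add_left, inner_add_left, real_inner_smul_left, hR, real_inner_comm G]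
  field_simp
  ring

end Projection

theorem delta_point_identified_general
    {V : Type*} [NormedAddCommGroup V] [InnerProductSpace ℝ V] {d : ℕ}
    (Y X : V) (W₁ : Fin d → V)
    (hpdW1 : (gram W₁).PosDef)
    (hvXp : 0 < ⟪perpW1 W₁ X, perpW1 W₁ X⟫)
    (hvarX : 0 < ⟪X, X⟫) (hvarY : 0 < ⟪Y, Y⟫)
    (βmed : ℝ) (γmed : Fin d → ℝ) (Vres : V)
    (hmed : Y = βmed • X + (∑ i, γmed i • W₁ i) + Vres)
    (hVX : ⟪Vres, X⟫ = 0)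
    (hshort : ⟪Y, X⟫ / ⟪X, X⟫ ≠ βmed)
    (R2l : ℝ)
    (hR2l : R2l ∈ Set.Ioc
      (⟪βmed • X + ∑ i, γmed i • W₁ i, βmed • X + ∑ i, γmed i • W₁ i⟫ / ⟪Y, Y⟫) 1) :
    ∀ B δ : ℝ, γmed + B • pi1 W₁ X ≠ 0 →
      f0 ⟪perpW1 W₁ X, perpW1 W₁ X⟫
          ⟪∑ i, γmed i • W₁ i, ∑ i, γmed i • W₁ i⟫
          ⟪X, ∑ i, γmed i • W₁ i⟫
          ⟪∑ i, pi1 W₁ X i • W₁ i, ∑ i, pi1 W₁ X i • W₁ i⟫ B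
        + δ * f1 R2l
          (⟪βmed • X + ∑ i, γmed i • W₁ i, βmed • X + ∑ i, γmed i • W₁ i⟫ / ⟪Y, Y⟫)
          ⟪Y, Y⟫
          ⟪X, ∑ i, γmed i • W₁ i⟫
          ⟪∑ i, pi1 W₁ X i • W₁ i, ∑ i, pi1 W₁ X i • W₁ i⟫
          ⟪perpW1 W₁ X, perpW1 W₁ X⟫ B = 0 →
      (f1 R2l
          (⟪βmed • X + ∑ i, γmed i • W₁ i, βmed • X + ∑ i, γmed i • W₁ i⟫ / ⟪Y, Y⟫)
          ⟪Y, Y⟫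
          ⟪X, ∑ i, γmed i • W₁ i⟫
          ⟪∑ i, pi1 W₁ X i • W₁ i, ∑ i, pi1 W₁ X i • W₁ i⟫
          ⟪perpW1 W₁ X, perpW1 W₁ X⟫ B ≠ 0
        ∧ δ = -(f0 ⟪perpW1 W₁ X, perpW1 W₁ X⟫
            ⟪∑ i, γmed i • W₁ i, ∑ i, γmed i • W₁ i⟫
            ⟪X, ∑ i, γmed i • W₁ i⟫
            ⟪∑ i, pi1 W₁ X i • W₁ i, ∑ i, pi1 W₁ X i • W₁ i⟫ B)
          / f1 R2l
            (⟪βmed • X + ∑ i, γmed i • W₁ i, βmed • X + ∑ i, γmed i • W₁ i⟫ / ⟪Y, Y⟫)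
            ⟪Y, Y⟫
            ⟪X, ∑ i, γmed i • W₁ i⟫
            ⟪∑ i, pi1 W₁ X i • W₁ i, ∑ i, pi1 W₁ X i • W₁ i⟫
            ⟪perpW1 W₁ X, perpW1 W₁ X⟫ B) := by
  intro B δ hγ h
  have hcov : ⟪X, ∑ i, γmed i • W₁ i⟫ ≠ 0 := fun h0 =>
    hshort (by rw [inner_div_inner_self_eq_add hmed hVX hvarX.ne', h0, zero_div, add_zero])
  exact f1_ne_zero_and_eq_neg_f0_div_f1 hvXp.ne' (f0_factor_pos hpdW1 X hγ).ne'
    (mul_ne_zero (mul_ne_zero (sub_ne_zero.mpr hR2l.1.ne') hvarY.ne') hcov) h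

/-- Point identification of `δ` given the bias (Oster's Proposition 3):
for any non-degenerate bias `B`, `f₁(B, R²_long) ≠ 0` and the unique `δ`
solving `f₀(B) + δ·f₁(B, R²_long) = 0` is `−f₀(B)/f₁(B, R²_long)`. -/
theorem delta_point_identified
    {V : Type*} [NormedAddCommGroup V] [InnerProductSpace ℝ V] {d : ℕ}
    (Y X : V) (W₁ : Fin d → V)
    (hpdW1 : (gram W₁).PosDef)
    (hpdYX : (gram (Sum.elim (fun _ : Unit => Y) (Sum.elim (fun _ : Unit => X) W₁))).PosDef)
    (hvXp : 0 < ⟪perpW1 W₁ X, perpW1 W₁ X⟫)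
    (hvarX : 0 < ⟪X, X⟫) (hvarY : 0 < ⟪Y, Y⟫)
    (βmed : ℝ) (γmed : Fin d → ℝ) (Vres : V)
    (hmed : Y = βmed • X + (∑ i, γmed i • W₁ i) + Vres)
    (hVX : ⟪Vres, X⟫ = 0) (hVW1 : ∀ i, ⟪Vres, W₁ i⟫ = 0)
    (hshort : ⟪Y, X⟫ / ⟪X, X⟫ ≠ βmed)
    (R2l : ℝ)
    (hR2l : R2l ∈ Set.Ioc
      (⟪βmed • X + ∑ i, γmed i • W₁ i, βmed • X + ∑ i, γmed i • W₁ i⟫ / ⟪Y, Y⟫) 1) :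
    ∀ B δ : ℝ, γmed + B • pi1 W₁ X ≠ 0 →
      f0 ⟪perpW1 W₁ X, perpW1 W₁ X⟫
          ⟪∑ i, γmed i • W₁ i, ∑ i, γmed i • W₁ i⟫
          ⟪X, ∑ i, γmed i • W₁ i⟫
          ⟪∑ i, pi1 W₁ X i • W₁ i, ∑ i, pi1 W₁ X i • W₁ i⟫ B
        + δ * f1 R2l
          (⟪βmed • X + ∑ i, γmed i • W₁ i, βmed • X + ∑ i, γmed i • W₁ i⟫ / ⟪Y, Y⟫)
          ⟪Y, Y⟫
          ⟪X, ∑ i, γmed i • W₁ i⟫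
          ⟪∑ i, pi1 W₁ X i • W₁ i, ∑ i, pi1 W₁ X i • W₁ i⟫
          ⟪perpW1 W₁ X, perpW1 W₁ X⟫ B = 0 →
      (f1 R2l
          (⟪βmed • X + ∑ i, γmed i • W₁ i, βmed • X + ∑ i, γmed i • W₁ i⟫ / ⟪Y, Y⟫)
          ⟪Y, Y⟫
          ⟪X, ∑ i, γmed i • W₁ i⟫
          ⟪∑ i, pi1 W₁ X i • W₁ i, ∑ i, pi1 W₁ X i • W₁ i⟫
          ⟪perpW1 W₁ X, perpW1 W₁ X⟫ B ≠ 0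
        ∧ δ = -(f0 ⟪perpW1 W₁ X, perpW1 W₁ X⟫
            ⟪∑ i, γmed i • W₁ i, ∑ i, γmed i • W₁ i⟫
            ⟪X, ∑ i, γmed i • W₁ i⟫
            ⟪∑ i, pi1 W₁ X i • W₁ i, ∑ i, pi1 W₁ X i • W₁ i⟫ B)
          / f1 R2l
            (⟪βmed • X + ∑ i, γmed i • W₁ i, βmed • X + ∑ i, γmed i • W₁ i⟫ / ⟪Y, Y⟫)
            ⟪Y, Y⟫
            ⟪X, ∑ i, γmed i • W₁ i⟫
            ⟪∑ i, pi1 W₁ X i • W₁ i, ∑ i, pi1 W₁ X i • W₁ i⟫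
            ⟪perpW1 W₁ X, perpW1 W₁ X⟫ B) :=
  delta_point_identified_general Y X W₁ hpdW1 hvXp hvarX hvarY βmed γmed Vres hmed hVX hshort R2l
    hR2l
end
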